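/- Let α > 0 and let B solve B' = 8 - 16α/B with B(0) = B₀ > 2α. Then B is strictly increasing, exists for all t ≥ 0, and B(t) → ∞ as t → ∞; moreover A(t) := A₀(1 - 2α/B₀)/(1 - 2α/B(t)) solves A' = -16αA/B² and A(t) → A₀(1 - 2α/B₀) as t → ∞. -/

import Mathlib

/-!
Write `F b = 8 - 16α/b`. Since `F B₀ > 0`, a solution of `B' = F B` can never fall below `B₀`,
and as `F` is increasing, `B' ≥ F B₀ > 0` from then on, so `B` grows at least linearly.
For existence, separate variables: the time at which the solution reaches `2α + exp u` is an
increasing bijection of `u ∈ ℝ` onto `ℝ`, and inverting it gives a global solution.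
The claims about `A` are then a direct computation and `2α/B → 0`.
-/

open Set Filter Topology

section Autonomous

variable {F B : ℝ → ℝ} {a : ℝ}

theorem initial_le_of_hasDerivAt_autonomous (hF₀ : 0 < F (B a))
    (hB : ∀ t ∈ Ici a, HasDerivAt B (F (B t)) t) {t : ℝ} (ht : t ∈ Ici a) : B a ≤ B t := by
  have hcont : ContinuousOn B (Icc a t) := fun s hs => (hB s hs.1).continuousAt.continuousWithinAt
  -- `-B` stays below the constant `-B a`, since it has negative slope wherever they meet
  have key := image_le_of_deriv_right_lt_deriv_boundary' (f := fun s => -B s)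
    (f' := fun s => -F (B s)) (B := fun _ => -B a) (B' := fun _ => 0) hcont.neg
    (fun s hs => (hB s hs.1).neg.hasDerivWithinAt) le_rfl continuousOn_const
    (fun _ _ => hasDerivWithinAt_const _ _ _) ?_ ⟨ht, le_rfl⟩
  · simpa using key
  · intro s _ hs
    simp only [neg_inj] at hs
    simpa [hs] using hF₀

theorem initial_slope_le_of_hasDerivAt_autonomous (hF : MonotoneOn F (Ici (B a)))
    (hF₀ : 0 < F (B a)) (hB : ∀ t ∈ Ici a, HasDerivAt B (F (B t)) t) {t : ℝ} (ht : t ∈ Ici a) :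
    F (B a) ≤ F (B t) :=
  hF self_mem_Ici (initial_le_of_hasDerivAt_autonomous hF₀ hB ht)
    (initial_le_of_hasDerivAt_autonomous hF₀ hB ht)

theorem strictMonoOn_of_hasDerivAt_autonomous (hF : MonotoneOn F (Ici (B a)))
    (hF₀ : 0 < F (B a)) (hB : ∀ t ∈ Ici a, HasDerivAt B (F (B t)) t) :
    StrictMonoOn B (Ici a) := by
  refine strictMonoOn_of_hasDerivWithinAt_pos (convex_Ici a)
    (fun t ht => (hB t ht).continuousAt.continuousWithinAt) (f' := fun t => F (B t))
    (fun t ht => (hB t (interior_subset ht)).hasDerivWithinAt) fun t ht => ?_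
  exact hF₀.trans_le (initial_slope_le_of_hasDerivAt_autonomous hF hF₀ hB (interior_subset ht))

theorem add_mul_sub_le_of_hasDerivAt_autonomous (hF : MonotoneOn F (Ici (B a)))
    (hF₀ : 0 < F (B a)) (hB : ∀ t ∈ Ici a, HasDerivAt B (F (B t)) t) {t : ℝ} (ht : t ∈ Ici a) :
    B a + F (B a) * (t - a) ≤ B t := by
  have hderiv : ∀ s ∈ Ici a, HasDerivAt (fun s => B s - F (B a) * s) (F (B s) - F (B a)) s :=
    fun s hs => ((hB s hs).fun_sub ((hasDerivAt_id' s).const_mul (F (B a)))).congr_deriv (by ring)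
  have hmono : MonotoneOn (fun s => B s - F (B a) * s) (Ici a) :=
    monotoneOn_of_hasDerivWithinAt_nonneg (convex_Ici a)
      (fun s hs => (hderiv s hs).continuousAt.continuousWithinAt)
      (fun s hs => (hderiv s (interior_subset hs)).hasDerivWithinAt) fun s hs =>
        sub_nonneg.2 (initial_slope_le_of_hasDerivAt_autonomous hF hF₀ hB (interior_subset hs))
  have := hmono self_mem_Ici ht ht
  simp only at this
  linarith

theorem tendsto_atTop_of_hasDerivAt_autonomous (hF : MonotoneOn F (Ici (B a)))
    (hF₀ : 0 < F (B a)) (hB : ∀ t ∈ Ici a, HasDerivAt B (F (B t)) t) :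
    Tendsto B atTop atTop := by
  refine tendsto_atTop_mono' atTop ?_ (tendsto_atTop_add_const_left _ (B a)
    ((tendsto_atTop_add_const_right _ (-a) tendsto_id).const_mul_atTop hF₀))
  filter_upwards [eventually_ge_atTop a] with t ht
  simpa [sub_eq_add_neg] using add_mul_sub_le_of_hasDerivAt_autonomous hF hF₀ hB ht

end Autonomous

open Real

theorem monotoneOn_eight_sub_div {α b₀ : ℝ} (hα : 0 ≤ α) (hb₀ : 0 < b₀) :
    MonotoneOn (fun b => 8 - 16*α/b) (Ici b₀) := fun x hx y _ hxy =>
  sub_le_sub_left (div_le_div_of_nonneg_left (by positivity) (hb₀.trans_le hx) hxy) 8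

/-- Separating variables in `B' = 8 (B - 2α) / B`: the time at which the solution starting at `B₀`
reaches `B = 2α + exp u`. -/
noncomputable def rg2Time (α B₀ u : ℝ) : ℝ :=
  (2*α + exp u - B₀)/8 + α/4 * (u - log (B₀ - 2*α))

theorem hasDerivAt_rg2Time (α B₀ u : ℝ) : HasDerivAt (rg2Time α B₀) (exp u / 8 + α/4) u := by
  have h := ((((hasDerivAt_exp u).const_add (2*α)).sub_const B₀).div_const 8).add
    (((hasDerivAt_id' u).sub_const (log (B₀ - 2*α))).const_mul (α/4))
  exact h.congr_deriv (by ring)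

theorem rg2Time_strictMono {α : ℝ} (hα : 0 ≤ α) (B₀ : ℝ) : StrictMono (rg2Time α B₀) :=
  strictMono_of_hasDerivAt_pos (hasDerivAt_rg2Time α B₀) fun u => by positivity

theorem rg2Time_surjective {α : ℝ} (hα : 0 < α) (B₀ : ℝ) : Function.Surjective (rg2Time α B₀) := by
  have hcont : Continuous (rg2Time α B₀) :=
    continuous_iff_continuousAt.2 fun u => (hasDerivAt_rg2Time α B₀ u).continuousAt
  refine hcont.surjective ?_ ?_
  · refine tendsto_atTop_add_left_of_le _ ((2*α - B₀)/8) (fun u => ?_)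
      ((tendsto_atTop_add_const_right _ _ tendsto_id).const_mul_atTop (by positivity))
    linarith [exp_pos u]
  · exact (((tendsto_exp_atBot.const_add (2*α)).sub_const B₀).div_const 8).add_atBot
      ((tendsto_atBot_add_const_right _ _ tendsto_id).const_mul_atBot (by positivity))

theorem rg2Time_log_sub {α B₀ : ℝ} (hB₀ : 2*α < B₀) : rg2Time α B₀ (log (B₀ - 2*α)) = 0 := by
  simp [rg2Time, exp_log (sub_pos.2 hB₀)]

theorem exists_rg2_solution {α B₀ : ℝ} (hα : 0 < α) (hB₀ : 2*α < B₀) :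
    ∃ B : ℝ → ℝ, B 0 = B₀ ∧ ∀ t, 2*α < B t ∧ HasDerivAt B (8 - 16*α/(B t)) t := by
  set e := (rg2Time_strictMono hα.le B₀).orderIsoOfSurjective _ (rg2Time_surjective hα B₀)
  have hinv : ∀ t, HasDerivAt e.symm (exp (e.symm t) / 8 + α/4)⁻¹ t := fun t =>
    (hasDerivAt_rg2Time α B₀ _).of_local_left_inverse e.symm.continuous.continuousAt
      (by positivity) (Eventually.of_forall e.apply_symm_apply)
  refine ⟨fun t => 2*α + exp (e.symm t), ?_, fun t => ⟨by simp [exp_pos], ?_⟩⟩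
  · change 2*α + exp (e.symm 0) = B₀
    rw [e.symm_apply_eq.2 (rg2Time_log_sub hB₀).symm, exp_log (sub_pos.2 hB₀)]
    ring
  · have hB := (hinv t).exp.const_add (2*α)
    refine hB.congr_deriv ?_
    have : 0 < exp (e.symm t) := exp_pos _
    field_simp
    ring

theorem hasDerivAt_div_one_sub_div {B : ℝ → ℝ} {α t : ℝ} (K : ℝ)
    (hB : HasDerivAt B (8 - 16*α/(B t)) t) (h₀ : B t ≠ 0) (h₂ : B t ≠ 2*α) :
    HasDerivAt (fun s => K/(1 - 2*α/(B s))) (-16*α*(K/(1 - 2*α/(B t)))/(B t)^2) t := by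
  have hu : 1 - 2*α/(B t) ≠ 0 := by
    rw [sub_ne_zero, ne_comm, Ne, div_eq_one_iff_eq h₀]
    exact h₂.symm
  have hden := (hasDerivAt_const t (1:ℝ)).fun_sub ((hasDerivAt_const t (2*α)).fun_div hB h₀)
  refine ((hasDerivAt_const t K).fun_div hden hu).congr_deriv ?_
  field_simp
  ring

theorem tendsto_div_one_sub_div {ι : Type*} {l : Filter ι} {B : ι → ℝ} (hB : Tendsto B l atTop)
    (K c : ℝ) : Tendsto (fun t => K/(1 - c/(B t))) l (𝓝 K) := by
  have hden : Tendsto (fun t => 1 - c/(B t)) l (𝓝 1) := by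
    simpa using tendsto_const_nhds.sub (hB.const_div_atTop c)
  have h := tendsto_const_nhds (x := K) |>.div hden one_ne_zero
  rw [div_one] at h
  exact h

theorem rg2_sol_expanding_case_general
    (α A₀ B₀ : ℝ) (hα : 0 < α) (hB₀ : 2*α < B₀) :
    (∃ B : ℝ → ℝ, B 0 = B₀ ∧
      ∀ t ∈ Ici (0:ℝ), 0 < B t ∧ HasDerivAt B (8 - 16*α/(B t)) t) ∧
    (∀ B : ℝ → ℝ, B 0 = B₀ →
      (∀ t ∈ Ici (0:ℝ), 0 < B t ∧ HasDerivAt B (8 - 16*α/(B t)) t) →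
      StrictMonoOn B (Ici (0:ℝ)) ∧
      Tendsto B atTop atTop ∧
      (∀ t ∈ Ici (0:ℝ),
        HasDerivAt (fun s => A₀*(1 - 2*α/B₀)/(1 - 2*α/(B s)))
          (-16*α*(A₀*(1 - 2*α/B₀)/(1 - 2*α/(B t)))/(B t)^2) t) ∧
      Tendsto (fun t => A₀*(1 - 2*α/B₀)/(1 - 2*α/(B t))) atTop
        (nhds (A₀*(1 - 2*α/B₀)))) := by
  refine ⟨?_, fun B hB0 hB => ?_⟩
  · obtain ⟨B, hB0, hB⟩ := exists_rg2_solution hα hB₀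
    exact ⟨B, hB0, fun t _ => ⟨by linarith [(hB t).1], (hB t).2⟩⟩
  have hODE : ∀ t ∈ Ici (0:ℝ), HasDerivAt B ((fun b => 8 - 16*α/b) (B t)) t :=
    fun t ht => (hB t ht).2
  have hF : MonotoneOn (fun b => 8 - 16*α/b) (Ici (B 0)) :=
    hB0 ▸ monotoneOn_eight_sub_div hα.le (by linarith)
  have hF₀ : 0 < (fun b => 8 - 16*α/b) (B 0) := by
    rw [hB0, sub_pos, div_lt_iff₀ (by linarith)]
    linarith
  have hgt : ∀ t ∈ Ici (0:ℝ), 2*α < B t := fun t ht =>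
    hB₀.trans_le (hB0 ▸ initial_le_of_hasDerivAt_autonomous (F := fun b => 8 - 16*α/b) hF₀ hODE ht)
  have htop := tendsto_atTop_of_hasDerivAt_autonomous hF hF₀ hODE
  refine ⟨strictMonoOn_of_hasDerivAt_autonomous hF hF₀ hODE, htop, fun t ht => ?_,
    tendsto_div_one_sub_div htop _ _⟩
  exact hasDerivAt_div_one_sub_div _ (hB t ht).2 (hB t ht).1.ne' (hgt t ht).ne'

/-- For the LRS Sol RG-2 flow with `B₀ > 2α`: a global solution of
`B' = 8 - 16α/B`, `B(0) = B₀` exists; any such solution is strictly increasing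
with `B(t) → ∞`, and `A(t) := A₀(1 - 2α/B₀)/(1 - 2α/B(t))` solves
`A' = -16αA/B²` with `A(t) → A₀(1 - 2α/B₀)` as `t → ∞`. -/
theorem rg2_sol_expanding_case
    (α A₀ B₀ : ℝ) (hα : 0 < α) (hA₀ : 0 < A₀) (hB₀ : 2*α < B₀) :
    (∃ B : ℝ → ℝ, B 0 = B₀ ∧
      ∀ t ∈ Ici (0:ℝ), 0 < B t ∧ HasDerivAt B (8 - 16*α/(B t)) t) ∧
    (∀ B : ℝ → ℝ, B 0 = B₀ →
      (∀ t ∈ Ici (0:ℝ), 0 < B t ∧ HasDerivAt B (8 - 16*α/(B t)) t) →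
      StrictMonoOn B (Ici (0:ℝ)) ∧
      Tendsto B atTop atTop ∧
      (∀ t ∈ Ici (0:ℝ),
        HasDerivAt (fun s => A₀*(1 - 2*α/B₀)/(1 - 2*α/(B s)))
          (-16*α*(A₀*(1 - 2*α/B₀)/(1 - 2*α/(B t)))/(B t)^2) t) ∧
      Tendsto (fun t => A₀*(1 - 2*α/B₀)/(1 - 2*α/(B t))) atTop
        (nhds (A₀*(1 - 2*α/B₀)))) :=
  rg2_sol_expanding_case_general α A₀ B₀ hα hB₀
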